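/- For every natural number n, h_n(x,s) = Σ_{j=0}^{⌊n/2⌋} (q^{j²} s^j / ((1+q)^j · [j]_{q²}!)) · D_q^{2j} x^n, i.e. h_n(x,s) is obtained by applying the q²-exponential series E_{q²}(q s D_q² / [2]_q) to x^n, where E_q(z) = Σ_{k≥0} q^{C(k,2)} z^k / [k]_q!. -/

import Mathlib

noncomputable section

/-- The field `ℚ(q,s)` of rational functions in two indeterminates. -/
abbrev F : Type := FractionRing (MvPolynomial (Fin 2) ℚ)

/-- The indeterminate `q`. -/
def q : F := algebraMap (MvPolynomial (Fin 2) ℚ) F (MvPolynomial.X 0)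

/-- The indeterminate `s`. -/
def s : F := algebraMap (MvPolynomial (Fin 2) ℚ) F (MvPolynomial.X 1)

/-- The q-integer `[n]_q = 1 + q + ⋯ + q^{n-1}`. -/
def qInt (n : ℕ) : F := ∑ i ∈ Finset.range n, q ^ i

/-- The q-factorial `[n]_q! = ∏_{k=1}^n [k]_q`. -/
def qFact (n : ℕ) : F := ∏ k ∈ Finset.range n, qInt (k + 1)

/-- The q-binomial coefficient `[n choose k]_q = [n]_q!/([k]_q! [n-k]_q!)`. -/
def qBinom (n k : ℕ) : F := qFact n / (qFact k * qFact (n - k))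

/-- The operator `X` of multiplication by `x` on `F[x]`. -/
def Xop : Module.End F (Polynomial F) := LinearMap.mulLeft F Polynomial.X

/-- Division by `x` (discarding the constant term), as a linear map. -/
def divXL : Polynomial F →ₗ[F] Polynomial F where
  toFun := Polynomial.divX
  map_add' p r := Polynomial.divX_add
  map_smul' a p := by
    ext n
    simp [Polynomial.coeff_divX, Polynomial.coeff_smul]

/-- The q-derivative `D_q f(x) = (f(qx) - f(x))/((q-1)x)`; it is the F-linear
operator on `F[x]` determined by `D_q x^n = [n]_q x^{n-1}`. -/
def Dq : Module.End F (Polynomial F) :=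
  (q - 1)⁻¹ •
    (divXL ∘ₗ
      ((Polynomial.aeval (Polynomial.C q * Polynomial.X)).toLinearMap - LinearMap.id))

/-- The polynomials `h_n(x,t) = Σ_j q^{j²} t^j [n]_q!/((1+q)⋯(1+q^j)·[j]_q!·[n-2j]_q!)
x^{n-2j}` (the parameter `t` will be specialized to `s` or `q²s`). -/
def h (t : F) (n : ℕ) : Polynomial F :=
  ∑ j ∈ Finset.range (n / 2 + 1),
    Polynomial.C (q ^ (j ^ 2) * t ^ j * qFact n /
        ((∏ i ∈ Finset.range j, (1 + q ^ (i + 1))) * qFact j * qFact (n - 2 * j))) *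
      Polynomial.X ^ (n - 2 * j)


/-- The q²-factorial `[j]_{q²}! = ∏_{k=1}^j [k]_{q²}`. -/
def q2Fact (j : ℕ) : F := ∏ k ∈ Finset.range j, ∑ i ∈ Finset.range (k + 1), (q ^ 2) ^ i

/-! The coefficients agree term by term. On monomials `D_q^k x^n = [n]_q!/[n-k]_q! · x^{n-k}`, and
the two denominators agree because `(1 + q^k)[k]_q = [2k]_q = (1 + q)[k]_{q²}`, whence
`(1+q)(1+q²)⋯(1+q^j) · [j]_q! = (1+q)^j · [j]_{q²}!`. The only further input is that `q` is not a
root of unity, which makes `q - 1` and the `q`-factorials invertible. -/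

open Finset Polynomial

section GeomSum

variable {R : Type*} [CommSemiring R]

theorem geom_sum_two_mul_eq_one_add_mul (x : R) (m : ℕ) :
    ∑ i ∈ range (2 * m), x ^ i = (1 + x) * ∑ i ∈ range m, (x ^ 2) ^ i := by
  induction m with
  | zero => simp
  | succ m ih =>
    rw [show 2 * (m + 1) = 2 * m + 1 + 1 by ring, sum_range_succ, sum_range_succ, ih,
      sum_range_succ]
    ring

theorem geom_sum_two_mul_eq_one_add_pow_mul (x : R) (m : ℕ) :
    ∑ i ∈ range (2 * m), x ^ i = (1 + x ^ m) * ∑ i ∈ range m, x ^ i := by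
  rw [two_mul, sum_range_add, one_add_mul, mul_sum]
  simp only [pow_add]

theorem one_add_pow_mul_geom_sum (x : R) (m : ℕ) :
    (1 + x ^ m) * ∑ i ∈ range m, x ^ i = (1 + x) * ∑ i ∈ range m, (x ^ 2) ^ i := by
  rw [← geom_sum_two_mul_eq_one_add_pow_mul, geom_sum_two_mul_eq_one_add_mul]

end GeomSum

theorem q_pow_ne_one {m : ℕ} (hm : m ≠ 0) : q ^ m ≠ 1 := by
  have hX : (MvPolynomial.X 0 ^ m : MvPolynomial (Fin 2) ℚ) ≠ 1 := fun h => by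
    simpa [MvPolynomial.constantCoeff_X, zero_pow hm] using
      congrArg MvPolynomial.constantCoeff h
  rw [q, ← map_pow, ← map_one (algebraMap (MvPolynomial (Fin 2) ℚ) F)]
  exact (IsFractionRing.injective _ F).ne hX

theorem q_sub_one_ne_zero : q - 1 ≠ 0 :=
  sub_ne_zero.mpr (by simpa using q_pow_ne_one one_ne_zero)

theorem qInt_mul_q_sub_one (m : ℕ) : qInt m * (q - 1) = q ^ m - 1 :=
  geom_sum_mul q m

theorem qInt_ne_zero {m : ℕ} (hm : m ≠ 0) : qInt m ≠ 0 := fun h => by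
  have := qInt_mul_q_sub_one m
  rw [h, zero_mul, eq_comm, sub_eq_zero] at this
  exact q_pow_ne_one hm this

theorem one_add_q_pow_mul_qInt (m : ℕ) :
    (1 + q ^ m) * qInt m = (1 + q) * ∑ i ∈ range m, (q ^ 2) ^ i :=
  one_add_pow_mul_geom_sum q m

theorem qFact_ne_zero (n : ℕ) : qFact n ≠ 0 :=
  prod_ne_zero_iff.mpr fun k _ => qInt_ne_zero k.succ_ne_zero

theorem qFact_succ (n : ℕ) : qFact (n + 1) = qFact n * qInt (n + 1) :=
  prod_range_succ _ n

theorem prod_one_add_q_pow_mul_qFact (j : ℕ) :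
    (∏ i ∈ range j, (1 + q ^ (i + 1))) * qFact j = (1 + q) ^ j * q2Fact j := by
  induction j with
  | zero => simp [qFact, q2Fact]
  | succ k ih =>
    rw [prod_range_succ, qFact_succ, q2Fact, prod_range_succ, ← q2Fact]
    linear_combination qInt (k + 1) * (1 + q ^ (k + 1)) * ih +
      (1 + q) ^ k * q2Fact k * one_add_q_pow_mul_qInt (k + 1)

theorem Dq_X_pow (m : ℕ) : Dq (X ^ m) = qInt m • (X ^ (m - 1) : F[X]) := by
  have hDq : Dq (X ^ m) = (q - 1)⁻¹ • divX (C (q ^ m - 1) * X ^ m) := by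
    simp [Dq, divXL, mul_pow, C_sub, sub_mul]
  rw [hDq, divX_C_mul, divX_X_pow]
  rcases m with _ | m
  · simp [qInt]
  · rw [if_neg m.succ_ne_zero, smul_eq_C_mul, ← mul_assoc, ← C_mul, ← smul_eq_C_mul,
      ← qInt_mul_q_sub_one, mul_comm (qInt _), inv_mul_cancel_left₀ q_sub_one_ne_zero]

theorem Dq_pow_X_pow_add (n k : ℕ) :
    (Dq ^ k) (X ^ (n + k)) = (qFact (n + k) / qFact n) • (X ^ n : F[X]) := by
  induction k with
  | zero => simp [div_self (qFact_ne_zero n)]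
  | succ k ih =>
    rw [pow_succ, Module.End.mul_apply, ← add_assoc, Dq_X_pow, Nat.add_sub_cancel, map_smul,
      ih, smul_smul, qFact_succ, mul_div_assoc', mul_comm (qInt _)]

theorem Dq_pow_X_pow {n k : ℕ} (hk : k ≤ n) :
    (Dq ^ k) (X ^ n) = (qFact n / qFact (n - k)) • (X ^ (n - k) : F[X]) := by
  obtain ⟨m, rfl⟩ := Nat.exists_eq_add_of_le' hk
  rw [Nat.add_sub_cancel, Dq_pow_X_pow_add]

theorem h_eq_qExp_apply (n : ℕ) :
    h s n =
      ∑ j ∈ Finset.range (n / 2 + 1),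
        (q ^ (j ^ 2) * s ^ j / ((1 + q) ^ j * q2Fact j)) •
          (Dq ^ (2 * j)) (Polynomial.X ^ n) := by
  unfold h
  refine sum_congr rfl fun j hj => ?_
  have h2j : 2 * j ≤ n := by
    have := mem_range.mp hj
    omega
  rw [Dq_pow_X_pow h2j, smul_smul, smul_eq_C_mul, ← prod_one_add_q_pow_mul_qFact,
    div_mul_div_comm]

end
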